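/- arXiv:math/9404238 — 2 statements merged into one kernel-verified Lean document; each statement's English description precedes it below -/
import Mathlib

section
/- For every irrational ρ ∈ (0,1), the set of extreme points of Λ_ρ is infinite; in particular Λ_ρ is not a polygon. -/
/-!
The lines `x + y = ρ` and `y = x - ρ` meet at `(ρ, 0)`; let `N` and `D` be the affine functionals
vanishing on them, so that `D ≥ 0` on `Λ_ρ` and `N / D` measures the slope seen from `(ρ, 0)`.
At the generator `ρ_{m,n}` this ratio is `(α_m + α_n - ρ) / ((2n + 1)ρ - α_m + α_n)`. Since
`α_m < ρ`, it stays strictly below `Ψ := max_{n ≥ 1, α_n < ρ} α_n / (2nρ + α_n)` (a maximum, as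
the `n`-th term is `< 1 / (2n)`), while letting `α_m ↑ ρ` along the orbit of the irrational rotation
pushes the ratio at `(m, n)`, `n` a maximiser, up to `Ψ`.

If `Λ_ρ` had finitely many extreme points, the largest ratio `N / D` among them would bound it on
all of `Λ_ρ`, hence be `≥ Ψ > 0`, and would be attained at an extreme point `v` with `N v > 0`.
Only finitely many generators satisfy `N ≥ N v / 2`, so `Λ_ρ` is the convex hull of these and of
the compact part `{N ≤ N v / 2}`; being extreme, `v` is one of those generators, which contradicts
the strict bound.
-/

open Filter Topology

noncomputable def alphaSeq (ρ : ℝ) (n : ℕ) : ℝ := (⌈(n : ℝ) * ρ⌉ : ℝ) - (n : ℝ) * ρ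

noncomputable def vecRho (ρ : ℝ) (m n : ℕ) : ℝ × ℝ :=
  ((⌈(m : ℝ) * ρ⌉ : ℝ) / ((m : ℝ) + (n : ℝ) + 1),
   (⌈(n : ℝ) * ρ⌉ : ℝ) / ((m : ℝ) + (n : ℝ) + 1))

noncomputable def LambdaSet (ρ : ℝ) : Set (ℝ × ℝ) :=
  closure (convexHull ℝ
    ({((0 : ℝ), (0 : ℝ))} ∪
      {p : ℝ × ℝ | ∃ m n : ℕ, alphaSeq ρ m < ρ ∧ alphaSeq ρ n < ρ ∧ p = vecRho ρ m n}))

open Set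

section Convex

variable {E : Type*} [AddCommGroup E] [Module ℝ E]

theorem IsCompact.convexJoin [TopologicalSpace E] [ContinuousAdd E] [ContinuousSMul ℝ E]
    {s t : Set E} (hs : IsCompact s) (ht : IsCompact t) : IsCompact (_root_.convexJoin ℝ s t) := by
  have : _root_.convexJoin ℝ s t =
      (fun q : ℝ × E × E => (1 - q.1) • q.2.1 + q.1 • q.2.2) '' (Icc 0 1 ×ˢ s ×ˢ t) := by
    ext x
    simp only [mem_convexJoin, segment_eq_image, mem_image, mem_prod, Prod.exists]
    aesop
  rw [this]
  exact (isCompact_Icc.prod (hs.prod ht)).image (by fun_prop)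

theorem exists_mem_extremePoints_forall_mul_le_mul {s : Set E}
    (hfin : (s.extremePoints ℝ).Finite) (hs : convexHull ℝ (s.extremePoints ℝ) = s)
    (N D : E →ᵃ[ℝ] ℝ) (hD : ∀ p ∈ s, 0 ≤ D p) (hND : ∀ p ∈ s, D p = 0 → N p ≤ 0)
    (hpos : ∃ p ∈ s, 0 < D p) :
    ∃ v ∈ s.extremePoints ℝ, 0 < D v ∧ ∀ p ∈ s, N p * D v ≤ N v * D p := by
  set F := {p ∈ s.extremePoints ℝ | 0 < D p}
  have hF : F.Nonempty := by
    by_contra! hF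
    have hsub : s ⊆ D ⁻¹' Iic 0 := by
      rw [← hs]
      refine convexHull_min (fun p hp => ?_) ((convex_Iic 0).affine_preimage D)
      exact not_lt.1 fun h => hF.subset ⟨hp, h⟩
    obtain ⟨p, hp, hDp⟩ := hpos
    exact not_lt.2 (hsub hp) hDp
  obtain ⟨v, ⟨hvE, hDv⟩, hv⟩ :=
    F.exists_max_image (fun p => N p / D p) (hfin.subset (sep_subset _ _)) hF
  have hconv : Convex ℝ {p | N p * D v ≤ N v * D p} := by
    have : {p | N p * D v ≤ N v * D p} = (D v • N - N v • D) ⁻¹' Iic 0 := by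
      ext p
      simp [mul_comm]
    exact this ▸ (convex_Iic 0).affine_preimage _
  refine ⟨v, hvE, hDv, fun p hp => ?_⟩
  rw [← hs] at hp
  refine convexHull_min (fun q hq => ?_) hconv hp
  rcases (hD q hq.1).eq_or_lt with hDq | hDq
  · show N q * D v ≤ N v * D q
    rw [← hDq, mul_zero]
    exact mul_nonpos_of_nonpos_of_nonneg (hND q hq.1 hDq.symm) hDv.le
  · exact (div_le_div_iff₀ hDq hDv).1 (hv q ⟨hq, hDq⟩)

theorem mem_of_mem_extremePoints_closure_convexHull [TopologicalSpace E]
    [IsTopologicalAddGroup E] [ContinuousSMul ℝ E] [T2Space E] {S : Set E}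
    (hS : IsCompact (closure (convexHull ℝ S))) {N : E →ᵃ[ℝ] ℝ} (hN : Continuous N) {c : ℝ}
    (hfin : {p ∈ S | c ≤ N p}.Finite) {v : E}
    (hv : v ∈ (closure (convexHull ℝ S)).extremePoints ℝ) (hvc : c < N v) : v ∈ S := by
  set A := closure (convexHull ℝ S)
  set T := {p ∈ S | c ≤ N p}
  set K := A ∩ N ⁻¹' Iic c
  have hK : IsCompact K := hS.inter_right (isClosed_Iic.preimage hN)
  have hKconv : Convex ℝ K :=
    (convex_convexHull ℝ S).closure.inter ((convex_Iic c).affine_preimage N)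
  have hTA : convexHull ℝ T ⊆ A := (convexHull_mono (sep_subset _ _)).trans subset_closure
  have hST : S ⊆ T ∪ K := fun p hp =>
    (le_or_gt c (N p)).imp (fun h => ⟨hp, h⟩)
      fun h => ⟨subset_closure (subset_convexHull ℝ S hp), h.le⟩
  have hvT : v ∈ convexHull ℝ T := by
    rcases K.eq_empty_or_nonempty with hK0 | hK0
    · rw [hK0, union_empty] at hST
      exact closure_minimal (convexHull_mono hST) (hfin.isClosed_convexHull ℝ) hv.1
    rcases T.eq_empty_or_nonempty with hT0 | hT0
    · rw [hT0, empty_union] at hST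
      have := closure_minimal (convexHull_min hST hKconv) hK.isClosed hv.1
      exact absurd this.2 (not_le.2 hvc)
    have hJ : A ⊆ convexJoin ℝ (convexHull ℝ T) K := by
      refine closure_minimal
        (convexHull_min (hST.trans ?_) ((convex_convexHull ℝ T).convexJoin hKconv))
        ((hfin.isCompact_convexHull ℝ).convexJoin hK).isClosed
      exact union_subset ((subset_convexHull ℝ T).trans (subset_convexJoin_left hK0))
        (subset_convexJoin_right hT0.convexHull)
    obtain ⟨a, ha, b, hb, hvab⟩ := mem_convexJoin.1 (hJ hv.1)
    rcases (mem_extremePoints_iff_forall_segment.1 hv).2 a (hTA ha) b hb.1 hvab with rfl | rfl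
    · exact ha
    · exact absurd hb.2 (not_le.2 hvc)
  exact (extremePoints_convexHull_subset
    (inter_extremePoints_subset_extremePoints_of_subset hTA ⟨hvT, hv⟩)).1

end Convex

section alphaSeq

variable {ρ : ℝ}

theorem alphaSeq_nonneg (ρ : ℝ) (n : ℕ) : 0 ≤ alphaSeq ρ n :=
  sub_nonneg.2 (Int.le_ceil _)

@[simp]
theorem alphaSeq_zero (ρ : ℝ) : alphaSeq ρ 0 = 0 := by
  simp [alphaSeq]

theorem alphaSeq_eq_fract_neg (ρ : ℝ) (n : ℕ) : alphaSeq ρ n = Int.fract (-((n : ℝ) * ρ)) := by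
  rw [Int.fract, Int.floor_neg, alphaSeq]
  push_cast
  ring

theorem exists_alphaSeq_mem_Ioo (hirr : Irrational ρ) {a b : ℝ} (ha : 0 ≤ a) (hab : a < b)
    (hb : b ≤ 1) : ∃ n, alphaSeq ρ n ∈ Ioo a b := by
  have : Fact ((0 : ℝ) < 1) := ⟨one_pos⟩
  have hd : DenseRange (fun n : ℕ => n • ((-ρ : ℝ) : AddCircle (1 : ℝ))) :=
    denseRange_zsmul_iff_nsmul.1 (AddCircle.denseRange_zsmul_coe_iff.2 (by simpa using hirr.neg))
  obtain ⟨n, y, hy, hyn⟩ := hd.exists_mem_open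
    (QuotientAddGroup.isOpenMap_coe _ isOpen_Ioo) ((nonempty_Ioo.2 hab).image _)
  refine ⟨n, ?_⟩
  convert hy
  rw [alphaSeq_eq_fract_neg]
  refine (AddCircle.coe_eq_coe_iff_of_mem_Ico (p := 1) (a := 0) ?_ ?_).1 ?_
  · rw [zero_add]; exact ⟨Int.fract_nonneg _, Int.fract_lt_one _⟩
  · rw [zero_add]; exact ⟨ha.trans hy.1.le, hy.2.trans_le hb⟩
  · rw [AddCircle.coe_fract, hyn, ← AddCircle.coe_nsmul, nsmul_eq_mul, mul_neg]

theorem exists_max_alphaSeq_ratio (hirr : Irrational ρ) (h0 : 0 < ρ) (h1 : ρ < 1) :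
    ∃ Ψ > 0, (∀ k, alphaSeq ρ k < ρ → alphaSeq ρ k ≤ Ψ * (2 * k * ρ + alphaSeq ρ k)) ∧
      ∃ n ≠ 0, alphaSeq ρ n < ρ ∧ alphaSeq ρ n = Ψ * (2 * n * ρ + alphaSeq ρ n) := by
  set r : ℕ → ℝ := fun k => alphaSeq ρ k / (2 * k * ρ + alphaSeq ρ k)
  have hden {k : ℕ} (hk : k ≠ 0) : 0 < 2 * k * ρ + alphaSeq ρ k := by
    have := alphaSeq_nonneg ρ k
    have : (0 : ℝ) < k := by positivity
    positivity
  have hr {k : ℕ} (hk : k ≠ 0) (hadm : alphaSeq ρ k < ρ) : r k < 1 / (2 * k) := by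
    have : (0 : ℝ) < k := by positivity
    rw [div_lt_div_iff₀ (hden hk) (by positivity)]
    nlinarith [alphaSeq_nonneg ρ k]
  obtain ⟨n₁, hn₁⟩ := exists_alphaSeq_mem_Ioo hirr le_rfl h0 h1.le
  have hn₁0 : n₁ ≠ 0 := by rintro rfl; simp at hn₁
  have hc : 0 < r n₁ := div_pos hn₁.1 (hden hn₁0)
  set F := {k | k ≠ 0 ∧ alphaSeq ρ k < ρ ∧ r n₁ ≤ r k}
  have hF : F.Finite := by
    refine (finite_Iic ⌈1 / (2 * r n₁)⌉₊).subset fun k ⟨hk, hadm, hle⟩ => ?_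
    have : (0 : ℝ) < k := by positivity
    have h := hle.trans_lt (hr hk hadm)
    rw [lt_div_iff₀ (by positivity)] at h
    rw [mem_Iic, ← Nat.cast_le (α := ℝ)]
    refine le_trans ?_ (Nat.le_ceil _)
    rw [le_div_iff₀ (by positivity)]
    linarith
  obtain ⟨n, ⟨hn0, hnadm, hn₁n⟩, hmax⟩ :=
    F.exists_max_image r hF ⟨n₁, hn₁0, hn₁.2, le_rfl⟩
  refine ⟨r n, hc.trans_le hn₁n, fun k hadm => ?_, n, hn0, hnadm, ?_⟩
  · rcases eq_or_ne k 0 with rfl | hk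
    · simp
    have hrk : r k ≤ r n := by
      by_cases h : r n₁ ≤ r k
      · exact hmax k ⟨hk, hadm, h⟩
      · exact (not_le.1 h).le.trans hn₁n
    rwa [div_le_iff₀ (hden hk)] at hrk
  · exact (div_mul_cancel₀ _ (hden hn0).ne').symm

theorem mem_closure_alphaSeq_image_lt (hirr : Irrational ρ) (h0 : 0 < ρ) (h1 : ρ < 1) :
    ρ ∈ closure (alphaSeq ρ '' {m | alphaSeq ρ m < ρ}) := by
  refine Metric.mem_closure_iff.2 fun ε hε => ?_
  obtain ⟨m, hm⟩ := exists_alphaSeq_mem_Ioo hirr (le_max_right (ρ - ε) 0)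
    (max_lt (by linarith) h0) h1.le
  refine ⟨_, ⟨m, hm.2, rfl⟩, ?_⟩
  rw [Real.dist_eq, abs_of_pos (by linarith [hm.2])]
  linarith [le_max_left (ρ - ε) 0, hm.1]

end alphaSeq

def lambdaGenerators (ρ : ℝ) : Set (ℝ × ℝ) :=
  {((0 : ℝ), (0 : ℝ))} ∪
    {p : ℝ × ℝ | ∃ m n : ℕ, alphaSeq ρ m < ρ ∧ alphaSeq ρ n < ρ ∧ p = vecRho ρ m n}

noncomputable def antidiagExcess (ρ : ℝ) : ℝ × ℝ →ᵃ[ℝ] ℝ :=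
  (LinearMap.fst ℝ ℝ ℝ + LinearMap.snd ℝ ℝ ℝ).toAffineMap - AffineMap.const ℝ (ℝ × ℝ) ρ

noncomputable def diagExcess (ρ : ℝ) : ℝ × ℝ →ᵃ[ℝ] ℝ :=
  (LinearMap.snd ℝ ℝ ℝ - LinearMap.fst ℝ ℝ ℝ).toAffineMap + AffineMap.const ℝ (ℝ × ℝ) ρ

@[simp]
theorem antidiagExcess_apply (ρ : ℝ) (p : ℝ × ℝ) : antidiagExcess ρ p = p.1 + p.2 - ρ := rfl

@[simp]
theorem diagExcess_apply (ρ : ℝ) (p : ℝ × ℝ) : diagExcess ρ p = p.2 - p.1 + ρ := rfl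

section vecRho

variable {ρ : ℝ}

theorem vecRho_eq (ρ : ℝ) (m n : ℕ) :
    vecRho ρ m n =
      ((m * ρ + alphaSeq ρ m) / (m + n + 1), (n * ρ + alphaSeq ρ n) / (m + n + 1)) := by
  simp [vecRho, alphaSeq]

theorem antidiagExcess_vecRho (ρ : ℝ) (m n : ℕ) :
    antidiagExcess ρ (vecRho ρ m n) = (alphaSeq ρ m + alphaSeq ρ n - ρ) / (m + n + 1) := by
  rw [vecRho_eq, antidiagExcess_apply]
  field_simp
  ring

theorem diagExcess_vecRho (ρ : ℝ) (m n : ℕ) :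
    diagExcess ρ (vecRho ρ m n) =
      ((2 * n + 1) * ρ - alphaSeq ρ m + alphaSeq ρ n) / (m + n + 1) := by
  rw [vecRho_eq, diagExcess_apply]
  field_simp
  ring

theorem vecRho_mem_Icc (h0 : 0 ≤ ρ) {m n : ℕ} (hm : alphaSeq ρ m < ρ) (hn : alphaSeq ρ n < ρ) :
    vecRho ρ m n ∈ Icc 0 (ρ, ρ) := by
  have hm0 := alphaSeq_nonneg ρ m
  have hn0 := alphaSeq_nonneg ρ n
  rw [vecRho_eq]
  refine ⟨⟨by positivity, by positivity⟩, ?_, ?_⟩ <;>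
  · dsimp only
    rw [div_le_iff₀ (by positivity)]
    nlinarith [(m.cast_nonneg : (0 : ℝ) ≤ m), (n.cast_nonneg : (0 : ℝ) ≤ n)]

end vecRho

section LambdaSet

variable {ρ : ℝ}

theorem LambdaSet_subset_Icc (h0 : 0 ≤ ρ) : LambdaSet ρ ⊆ Icc 0 (ρ, ρ) := by
  refine closure_minimal (convexHull_min ?_ (convex_Icc _ _)) isClosed_Icc
  rintro _ (rfl | ⟨m, n, hm, hn, rfl⟩)
  · exact ⟨le_rfl, h0, h0⟩
  · exact vecRho_mem_Icc h0 hm hn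

theorem isCompact_LambdaSet (h0 : 0 ≤ ρ) : IsCompact (LambdaSet ρ) :=
  isCompact_Icc.of_isClosed_subset isClosed_closure (LambdaSet_subset_Icc h0)

theorem convex_LambdaSet (ρ : ℝ) : Convex ℝ (LambdaSet ρ) :=
  (convex_convexHull ℝ _).closure

theorem diagExcess_nonneg (h0 : 0 ≤ ρ) {p : ℝ × ℝ} (hp : p ∈ LambdaSet ρ) :
    0 ≤ diagExcess ρ p := by
  obtain ⟨⟨-, hp2⟩, hp1, -⟩ := LambdaSet_subset_Icc h0 hp
  rw [diagExcess_apply]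
  linarith [show p.2 ≥ 0 from hp2, show p.1 ≤ ρ from hp1]

theorem antidiagExcess_le_diagExcess (h0 : 0 ≤ ρ) {p : ℝ × ℝ} (hp : p ∈ LambdaSet ρ) :
    antidiagExcess ρ p ≤ diagExcess ρ p := by
  obtain ⟨-, hp1, -⟩ := LambdaSet_subset_Icc h0 hp
  rw [diagExcess_apply, antidiagExcess_apply]
  linarith [show p.1 ≤ ρ from hp1]

theorem finite_lambdaGenerators_le_antidiagExcess (h0 : 0 < ρ) {δ : ℝ} (hδ : 0 < δ) :
    {p ∈ lambdaGenerators ρ | δ ≤ antidiagExcess ρ p}.Finite := by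
  set B := ⌈ρ / δ⌉₊
  refine ((finite_Iic B).prod (finite_Iic B)).image (fun q => vecRho ρ q.1 q.2) |>.subset ?_
  rintro _ ⟨rfl | ⟨m, n, hm, hn, rfl⟩, hδp⟩
  · simp only [antidiagExcess_apply] at hδp
    linarith
  · rw [antidiagExcess_vecRho, le_div_iff₀ (by positivity)] at hδp
    have hB : ρ ≤ B * δ := (div_le_iff₀ hδ).1 (Nat.le_ceil _)
    refine ⟨(m, n), ⟨?_, ?_⟩, rfl⟩ <;> rw [mem_Iic, ← Nat.cast_le (α := ℝ)] <;>
      nlinarith [alphaSeq_nonneg ρ m, alphaSeq_nonneg ρ n,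
        (m.cast_nonneg : (0 : ℝ) ≤ m), (n.cast_nonneg : (0 : ℝ) ≤ n)]

end LambdaSet

section slope

variable {ρ : ℝ}

theorem exists_sharp_slope_bound (hirr : Irrational ρ) (h0 : 0 < ρ) (h1 : ρ < 1) :
    ∃ Ψ > 0, (∀ p ∈ lambdaGenerators ρ, antidiagExcess ρ p < Ψ * diagExcess ρ p) ∧
      ∀ c, (∀ p ∈ lambdaGenerators ρ, antidiagExcess ρ p ≤ c * diagExcess ρ p) → Ψ ≤ c := by
  obtain ⟨Ψ, hΨ, hle, n, hn0, hn, hΨn⟩ := exists_max_alphaSeq_ratio hirr h0 h1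
  refine ⟨Ψ, hΨ, ?_, fun c hc => ?_⟩
  · rintro _ (rfl | ⟨m, n, hm, hn, rfl⟩)
    · simp only [antidiagExcess_apply, diagExcess_apply]
      nlinarith
    · rw [antidiagExcess_vecRho, diagExcess_vecRho, ← mul_div_assoc]
      refine div_lt_div_of_pos_right ?_ (by positivity)
      nlinarith [hle n hn]
  · have hcl : alphaSeq ρ '' {m | alphaSeq ρ m < ρ} ⊆
        {t | t + alphaSeq ρ n - ρ ≤ c * ((2 * n + 1) * ρ - t + alphaSeq ρ n)} := by
      rintro _ ⟨m, hm, rfl⟩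
      have := hc _ (Or.inr ⟨m, n, hm, hn, rfl⟩)
      rwa [antidiagExcess_vecRho, diagExcess_vecRho, ← mul_div_assoc,
        div_le_div_iff_of_pos_right (by positivity)] at this
    have hρ := closure_minimal hcl (isClosed_le (by fun_prop) (by fun_prop))
      (mem_closure_alphaSeq_image_lt hirr h0 h1)
    have hpos : 0 < 2 * n * ρ + alphaSeq ρ n := by
      have : (0 : ℝ) < n := by positivity
      nlinarith [alphaSeq_nonneg ρ n]
    refine le_of_mul_le_mul_right ?_ hpos
    linarith [show ρ + alphaSeq ρ n - ρ ≤ c * ((2 * n + 1) * ρ - ρ + alphaSeq ρ n) from hρ]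

end slope

theorem stmt3 (ρ : ℝ) (hirr : Irrational ρ) (h0 : 0 < ρ) (h1 : ρ < 1) :
    (Set.extremePoints ℝ (LambdaSet ρ)).Infinite := by
  intro hfin
  have hcomp := isCompact_LambdaSet h0.le
  have hhull : convexHull ℝ ((LambdaSet ρ).extremePoints ℝ) = LambdaSet ρ := by
    rw [← (hfin.isClosed_convexHull ℝ).closure_eq]
    exact closure_convexHull_extremePoints hcomp (convex_LambdaSet ρ)
  obtain ⟨Ψ, hΨ, hlt, hsup⟩ := exists_sharp_slope_bound hirr h0 h1
  obtain ⟨v, hv, hDv, hvmax⟩ := exists_mem_extremePoints_forall_mul_le_mul hfin hhull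
    (antidiagExcess ρ) (diagExcess ρ) (fun p hp => diagExcess_nonneg h0.le hp)
    (fun p hp hD => hD ▸ antidiagExcess_le_diagExcess h0.le hp)
    ⟨0, subset_closure (subset_convexHull ℝ _ (Or.inl rfl)), by simpa using h0⟩
  have hΨv : Ψ * diagExcess ρ v ≤ antidiagExcess ρ v := by
    refine (le_div_iff₀ hDv).1 (hsup _ fun p hp => ?_)
    rw [div_mul_eq_mul_div, le_div_iff₀ hDv]
    exact hvmax p (subset_closure (subset_convexHull ℝ _ hp))
  have hNv : 0 < antidiagExcess ρ v := (mul_pos hΨ hDv).trans_le hΨv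
  have hvS : v ∈ lambdaGenerators ρ :=
    mem_of_mem_extremePoints_closure_convexHull hcomp
      (antidiagExcess ρ).continuous_of_finiteDimensional
      (finite_lambdaGenerators_le_antidiagExcess h0 (half_pos hNv)) hv (half_lt_self hNv)
  exact not_le.2 (hlt v hvS) hΨv
end

section
/- For every irrational ρ ∈ (0,1) there exist sequences (m_k) and (n_k) of natural numbers with m_k ≥ 1, α_{m_k} < ρ and α_{n_k} < ρ for all k, such that ⌈m_k ρ⌉/(m_k + n_k + 1) → 0 and the vectors ρ_{m_k,n_k} converge to (0, ρ) as k → ∞. -/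
open Filter Topology

/-!
Take `m k := ⌊1/ρ⌋₊` constant and `n k := ⌊k/ρ⌋₊`. For `n = ⌊j/ρ⌋₊` the integer `j` lies in
`[nρ, (n+1)ρ)`, so `⌈nρ⌉ ≤ j` and `α_n < ρ`. Since `n k → ∞` with `m` fixed, the first coordinate
of `ρ_{m,n_k}` tends to `0`, and `nρ ≤ ⌈nρ⌉ < nρ + 1` squeezes the second one to `ρ`.
-/

lemma alphaSeq_lt_of_le_of_lt {ρ : ℝ} {n : ℕ} {j : ℤ} (hlo : (n : ℝ) * ρ ≤ j)
    (hhi : (j : ℝ) < ((n : ℝ) + 1) * ρ) : alphaSeq ρ n < ρ := by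
  have hceil : (⌈(n : ℝ) * ρ⌉ : ℝ) ≤ j := by exact_mod_cast Int.ceil_le.mpr hlo
  unfold alphaSeq
  linarith

lemma alphaSeq_floor_div_lt {ρ : ℝ} (hρ : 0 < ρ) (j : ℕ) : alphaSeq ρ ⌊(j : ℝ) / ρ⌋₊ < ρ := by
  refine alphaSeq_lt_of_le_of_lt (j := j) ?_ ?_
  · exact_mod_cast (le_div_iff₀ hρ).mp (Nat.floor_le (by positivity))
  · exact_mod_cast (div_lt_iff₀ hρ).mp (Nat.lt_floor_add_one _)

lemma tendsto_ceil_mul_div_add (ρ : ℝ) (m : ℕ) :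
    Tendsto (fun n : ℕ => (⌈(n : ℝ) * ρ⌉ : ℝ) / ((m : ℝ) + n + 1)) atTop (𝓝 ρ) := by
  have hden : Tendsto (fun n : ℕ => (m : ℝ) + n + 1) atTop atTop :=
    tendsto_atTop_add_const_right _ _ (tendsto_atTop_add_const_left _ _ tendsto_natCast_atTop_atTop)
  have hlower : Tendsto (fun n : ℕ => ρ * ((n : ℝ) / (n + (m + 1)))) atTop (𝓝 ρ) := by
    simpa using (tendsto_natCast_div_add_atTop ((m : ℝ) + 1)).const_mul ρ
  have hupper : Tendsto (fun n : ℕ => ρ * ((n : ℝ) / (n + (m + 1))) + 1 / ((m : ℝ) + n + 1))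
      atTop (𝓝 ρ) := by
    simpa using hlower.add ((tendsto_const_nhds (x := (1 : ℝ))).div_atTop hden)
  refine tendsto_of_tendsto_of_tendsto_of_le_of_le hlower hupper (fun n => ?_) (fun n => ?_)
  · have hpos : (0 : ℝ) < m + n + 1 := by positivity
    rw [show ρ * ((n : ℝ) / (n + (m + 1))) = n * ρ / (m + n + 1) by ring_nf]
    exact div_le_div_of_nonneg_right (Int.le_ceil _) hpos.le
  · have hpos : (0 : ℝ) < m + n + 1 := by positivity
    rw [show ρ * ((n : ℝ) / (n + (m + 1))) + 1 / ((m : ℝ) + n + 1) = (n * ρ + 1) / (m + n + 1) by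
      ring_nf]
    exact div_le_div_of_nonneg_right (Int.ceil_lt_add_one _).le hpos.le

theorem stmt6_general (ρ : ℝ) (h0 : 0 < ρ) (h1 : ρ < 1) :
    ∃ m n : ℕ → ℕ,
      (∀ k, 1 ≤ m k ∧ alphaSeq ρ (m k) < ρ ∧ alphaSeq ρ (n k) < ρ) ∧
      Tendsto (fun k => (⌈(m k : ℝ) * ρ⌉ : ℝ) / ((m k : ℝ) + (n k : ℝ) + 1))
        atTop (𝓝 0) ∧
      Tendsto (fun k => vecRho ρ (m k) (n k)) atTop (𝓝 ((0 : ℝ), ρ)) := by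
  set m₀ := ⌊((1 : ℕ) : ℝ) / ρ⌋₊
  have hm₀ : 1 ≤ m₀ := Nat.one_le_floor_iff _ |>.mpr <| by
    rw [Nat.cast_one, one_le_div h0]
    exact h1.le
  have hn : Tendsto (fun k : ℕ => ⌊(k : ℝ) / ρ⌋₊) atTop atTop :=
    tendsto_nat_floor_atTop.comp (tendsto_natCast_atTop_atTop.atTop_div_const h0)
  have hden : Tendsto (fun k : ℕ => (m₀ : ℝ) + ⌊(k : ℝ) / ρ⌋₊ + 1) atTop atTop :=
    tendsto_atTop_add_const_right _ _ (tendsto_atTop_add_const_left _ _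
      (tendsto_natCast_atTop_atTop.comp hn))
  have hfirst := (tendsto_const_nhds (x := (⌈(m₀ : ℝ) * ρ⌉ : ℝ))).div_atTop hden
  refine ⟨fun _ => m₀, fun k => ⌊(k : ℝ) / ρ⌋₊,
    fun k => ⟨hm₀, alphaSeq_floor_div_lt h0 1, alphaSeq_floor_div_lt h0 k⟩, hfirst, ?_⟩
  exact hfirst.prodMk_nhds ((tendsto_ceil_mul_div_add ρ m₀).comp hn)

theorem stmt6 (ρ : ℝ) (hirr : Irrational ρ) (h0 : 0 < ρ) (h1 : ρ < 1) :
    ∃ m n : ℕ → ℕ,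
      (∀ k, 1 ≤ m k ∧ alphaSeq ρ (m k) < ρ ∧ alphaSeq ρ (n k) < ρ) ∧
      Tendsto (fun k => (⌈(m k : ℝ) * ρ⌉ : ℝ) / ((m k : ℝ) + (n k : ℝ) + 1))
        atTop (𝓝 0) ∧
      Tendsto (fun k => vecRho ρ (m k) (n k)) atTop (𝓝 ((0 : ℝ), ρ)) :=
  stmt6_general ρ h0 h1
end
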